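/- Let R > 0 and δ ∈ (0,π/2), and let h : 𝒫⁺_{R,δ} → ℂ be holomorphic and injective, satisfying h(z+1) = h(z) + 1 for every z ∈ 𝒫⁺_{R,δ} such that z+1 ∈ 𝒫⁺_{R,δ}. Then there exists c ∈ ℂ such that h(z) = z + c for all z ∈ 𝒫⁺_{R,δ}. -/

import Mathlib

/-!
Translating by integers, `h` extends from the half-plane `R < re z` (contained in `𝒫⁺_{R,δ}`) to an
injective entire function `H` with `H (z + 1) = H z + 1`. By the open mapping theorem `H` keeps away
from `H 0` outside the unit disc, so `K w = (H w⁻¹ - H 0)⁻¹` has a removable singularity at `0`.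
As `H n = n + H 0`, `K` agrees with the identity at the points `1 / n`, so `K = id` and
`H z = z + H 0` near `∞`, hence everywhere. The identity theorem on the connected sector then
carries `h = H` from the half-plane to all of `𝒫⁺_{R,δ}`.
-/

open Finset
open scoped Real

noncomputable section

/-- The sector `𝒫⁺_{R,δ} = {r e^{iθ} : r > R, -π/2-δ < θ < π/2+δ}`. -/
def Pp (R δ : ℝ) : Set ℂ := {z : ℂ | R < ‖z‖ ∧ |Complex.arg z| < Real.pi / 2 + δ}

/-- The sector `𝒫⁻_{R,δ} = {r e^{iθ} : r > R, π/2-δ < θ < 3π/2+δ}`. -/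
def Pm (R δ : ℝ) : Set ℂ := {z : ℂ | -z ∈ Pp R δ}

open Complex Metric Set Filter
open scoped Topology

section Sector

variable {R δ : ℝ}

theorem setOf_lt_re_subset_Pp (hR : 0 ≤ R) (hδ : 0 ≤ δ) : {z : ℂ | R < z.re} ⊆ Pp R δ :=
  fun z hz => ⟨hz.trans_le (re_le_norm z),
    (abs_arg_lt_pi_div_two_iff.mpr (Or.inl (hR.trans_lt hz))).trans_le (by linarith)⟩

theorem isOpen_Pp (hR : 0 ≤ R) (hδ : δ ≤ π / 2) : IsOpen (Pp R δ) := by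
  refine isOpen_iff_mem_nhds.mpr fun z hz => ?_
  have hslit : z ∈ slitPlane := by
    refine mem_slitPlane_iff_arg.mpr ⟨fun hπ => ?_, norm_pos_iff.mp (hR.trans_lt hz.1)⟩
    have := hz.2
    rw [hπ, abs_of_pos Real.pi_pos] at this
    linarith
  exact (continuousAt_const.eventually_lt continuous_norm.continuousAt hz.1).and
    ((continuousAt_arg hslit).abs.eventually_lt continuousAt_const hz.2)

theorem isPreconnected_Pp (hR : 0 ≤ R) (hδ : δ ≤ π / 2) : IsPreconnected (Pp R δ) := by
  have hpolar : Pp R δ = (fun p : ℝ × ℝ => (p.1 : ℂ) * exp (p.2 * I)) ''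
      (Ioi R ×ˢ Ioo (-(π / 2 + δ)) (π / 2 + δ)) := by
    ext z
    constructor
    · rintro ⟨hnorm, harg⟩
      exact ⟨(‖z‖, arg z), ⟨hnorm, abs_lt.mp harg⟩, by simp [norm_mul_exp_arg_mul_I z]⟩
    · rintro ⟨⟨r, θ⟩, ⟨hr : R < r, hθ : θ ∈ Set.Ioo _ _⟩, rfl⟩
      have hr0 : 0 < r := hR.trans_lt hr
      have harg : arg ((r : ℂ) * exp (θ * I)) = θ := by
        rw [arg_real_mul _ hr0, exp_mul_I]
        exact arg_cos_add_sin_mul_I ⟨by linarith [hθ.1], by linarith [hθ.2]⟩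
      refine ⟨?_, by rw [harg]; exact abs_lt.mpr hθ⟩
      rwa [norm_mul, norm_exp_ofReal_mul_I, norm_real, Real.norm_of_nonneg hr0.le, mul_one]
  rw [hpolar]
  exact ((convex_Ioi R).prod (convex_Ioo _ _)).isPreconnected.image _ (by fun_prop)

end Sector

theorem AnalyticAt.image_ball_mem_nhds_of_injective {f : ℂ → ℂ} {c : ℂ} {r : ℝ}
    (hf : AnalyticAt ℂ f c) (hinj : Function.Injective f) (hr : 0 < r) :
    f '' ball c r ∈ 𝓝 (f c) := by
  rcases hf.eventually_constant_or_nhds_le_map_nhds with hconst | hopen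
  · have hconst' : ∀ᶠ z in 𝓝[≠] c, f z = f c := hconst.filter_mono nhdsWithin_le_nhds
    obtain ⟨z, hz, hzc⟩ := (hconst'.and self_mem_nhdsWithin).exists
    exact absurd (hinj hz) hzc
  · exact hopen (image_mem_map (ball_mem_nhds c hr))

theorem Differentiable.exists_differentiableOn_ball_eq_inv_sub_of_injective {H : ℂ → ℂ}
    (hd : Differentiable ℂ H) (hinj : Function.Injective H) :
    ∃ K : ℂ → ℂ, DifferentiableOn ℂ K (ball 0 1) ∧
      ∀ w ∈ ball (0 : ℂ) 1, w ≠ 0 → K w = (H w⁻¹ - H 0)⁻¹ := by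
  obtain ⟨ε, hε, hball⟩ := Metric.mem_nhds_iff.mp
    ((hd.analyticAt 0).image_ball_mem_nhds_of_injective hinj one_pos)
  have hsep : ∀ w ∈ ball (0 : ℂ) 1 \ {0}, ε ≤ ‖H w⁻¹ - H 0‖ := by
    rintro w ⟨hw, hw0 : w ≠ 0⟩
    by_contra! hlt
    obtain ⟨z, hz, hzw⟩ := hball (mem_ball_iff_norm.mpr hlt)
    rw [hinj hzw, mem_ball_zero_iff, norm_inv, inv_lt_one₀ (norm_pos_iff.mpr hw0)] at hz
    exact (mem_ball_zero_iff.mp hw).not_gt hz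
  set k : ℂ → ℂ := fun w => (H w⁻¹ - H 0)⁻¹
  have hk : DifferentiableOn ℂ k (ball 0 1 \ {0}) := fun w hw =>
    (((hd _).comp w (differentiableAt_inv hw.2)).sub_const _).inv
      (norm_pos_iff.mp (hε.trans_le (hsep w hw))) |>.differentiableWithinAt
  have hk_bdd : BddAbove ((‖·‖) ∘ k '' (ball 0 1 \ {0})) := by
    refine ⟨ε⁻¹, ?_⟩
    rintro _ ⟨w, hw, rfl⟩
    simpa only [Function.comp_apply, k, norm_inv] using inv_anti₀ hε (hsep w hw)
  exact ⟨_, differentiableOn_update_limUnder_of_bddAbove (ball_mem_nhds 0 one_pos) hk hk_bdd,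
    fun w _ hw0 => Function.update_of_ne hw0 _ _⟩

theorem Differentiable.eq_add_const_of_injective_of_map_add_one {H : ℂ → ℂ}
    (hd : Differentiable ℂ H) (hinj : Function.Injective H) (hper : ∀ z, H (z + 1) = H z + 1) :
    ∀ z, H z = z + H 0 := by
  have hnat : ∀ n : ℕ, H n = n + H 0 := by
    intro n
    induction n with
    | zero => simp
    | succ n ih => rw [Nat.cast_succ, hper, ih]; ring
  obtain ⟨K, hK, hKeq⟩ := hd.exists_differentiableOn_ball_eq_inv_sub_of_injective hinj
  have hK_id : EqOn K id (ball 0 1) := by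
    refine (hK.analyticOnNhd isOpen_ball).eqOn_of_preconnected_of_frequently_eq
      analyticOnNhd_id (convex_ball 0 1).isPreconnected (mem_ball_self one_pos) ?_
    have hlim : Tendsto (fun n : ℕ => (n : ℂ)⁻¹) atTop (𝓝[≠] 0) :=
      tendsto_nhdsWithin_iff.mpr ⟨tendsto_inv_atTop_nhds_zero_nat,
        eventually_atTop.mpr ⟨1, fun n hn => inv_ne_zero (Nat.cast_ne_zero.mpr (by omega))⟩⟩
    refine hlim.frequently (Eventually.frequently ?_)
    filter_upwards [eventually_ge_atTop 2] with n hn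
    have hn' : (2 : ℝ) ≤ n := by exact_mod_cast hn
    have hn0 : (n : ℂ)⁻¹ ≠ 0 := inv_ne_zero (by norm_cast; omega)
    have hmem : (n : ℂ)⁻¹ ∈ ball (0 : ℂ) 1 := by
      rw [mem_ball_zero_iff, norm_inv, Complex.norm_natCast]
      exact inv_lt_one_of_one_lt₀ (by linarith)
    rw [hKeq _ hmem hn0, inv_inv, hnat, add_sub_cancel_right, id]
  have hfar : ∀ z : ℂ, 1 < ‖z‖ → H z = z + H 0 := by
    intro z hz
    have hz0 : z ≠ 0 := norm_pos_iff.mp (one_pos.trans hz)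
    have hmem : z⁻¹ ∈ ball (0 : ℂ) 1 := by
      rw [mem_ball_zero_iff, norm_inv]; exact inv_lt_one_of_one_lt₀ hz
    have := (hKeq _ hmem (inv_ne_zero hz0)).symm.trans (hK_id hmem)
    rw [inv_inv, id, inv_inj] at this
    linear_combination this
  have hev : H =ᶠ[𝓝 2] fun z => z + H 0 := by
    filter_upwards [(isOpen_lt continuous_const continuous_norm).mem_nhds
      (by norm_num : (1 : ℝ) < ‖(2 : ℂ)‖)] with z hz using hfar z hz
  exact congrFun ((hd.differentiableOn.analyticOnNhd isOpen_univ).eq_of_eventuallyEq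
    ((differentiable_id.add_const _).differentiableOn.analyticOnNhd isOpen_univ) hev)

section HalfPlane

variable {R : ℝ} {h : ℂ → ℂ}

theorem map_add_natCast_of_map_add_one (per : ∀ z : ℂ, R < z.re → h (z + 1) = h z + 1)
    {z : ℂ} (hz : R < z.re) (n : ℕ) : h (z + n) = h z + n := by
  induction n with
  | zero => simp
  | succ n ih =>
    have hzn : R < (z + n).re := by
      simp only [add_re, natCast_re]; linarith [n.cast_nonneg (α := ℝ)]
    rw [Nat.cast_succ, ← add_assoc, per _ hzn, ih, add_assoc]

def extendByTranslation (R : ℝ) (h : ℂ → ℂ) (z : ℂ) : ℂ :=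
  h (z + ⌈R - z.re + 1⌉₊) - ⌈R - z.re + 1⌉₊

theorem extendByTranslation_eq (per : ∀ z : ℂ, R < z.re → h (z + 1) = h z + 1) {z : ℂ} {n : ℕ}
    (hn : R < z.re + n) : extendByTranslation R h z = h (z + n) - n := by
  have hstable : ∀ m n : ℕ, m ≤ n → R < z.re + m → h (z + n) - n = h (z + m) - m := by
    intro m n hmn hm
    obtain ⟨k, rfl⟩ := Nat.exists_eq_add_of_le hmn
    rw [Nat.cast_add, ← add_assoc, map_add_natCast_of_map_add_one per (by simpa using hm)]
    ring
  have hceil : R < z.re + ⌈R - z.re + 1⌉₊ := by linarith [Nat.le_ceil (R - z.re + 1)]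
  rcases le_total n ⌈R - z.re + 1⌉₊ with hle | hle
  · exact hstable _ _ hle hn
  · exact (hstable _ _ hle hceil).symm

theorem extendByTranslation_of_lt_re (per : ∀ z : ℂ, R < z.re → h (z + 1) = h z + 1) {z : ℂ}
    (hz : R < z.re) : extendByTranslation R h z = h z := by
  simpa using extendByTranslation_eq per (n := 0) (by simpa using hz)

theorem extendByTranslation_add_one (per : ∀ z : ℂ, R < z.re → h (z + 1) = h z + 1) (z : ℂ) :
    extendByTranslation R h (z + 1) = extendByTranslation R h z + 1 := by
  obtain ⟨n, hn⟩ := exists_nat_gt (R - z.re)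
  rw [extendByTranslation_eq per (z := z + 1) (n := n) (by simp only [add_re, one_re]; linarith),
    extendByTranslation_eq per (z := z) (n := n + 1) (by push_cast; linarith)]
  rw [Nat.cast_succ, add_right_comm z 1, ← add_assoc]
  ring

theorem differentiable_extendByTranslation (per : ∀ z : ℂ, R < z.re → h (z + 1) = h z + 1)
    (hol : DifferentiableOn ℂ h {z | R < z.re}) : Differentiable ℂ (extendByTranslation R h) := by
  intro z₀
  obtain ⟨n, hn⟩ := exists_nat_gt (R - z₀.re)
  have hev : extendByTranslation R h =ᶠ[𝓝 z₀] fun z => h (z + n) - n := by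
    filter_upwards [(isOpen_lt continuous_const (continuous_re.add continuous_const)).mem_nhds
      (by linarith : R < z₀.re + n)] with z hz using extendByTranslation_eq per hz
  have hmem : {z : ℂ | R < z.re} ∈ 𝓝 (z₀ + n) :=
    (isOpen_lt continuous_const continuous_re).mem_nhds
      (by simp only [mem_ofPred_eq, add_re, natCast_re]; linarith)
  exact (((hol.differentiableAt hmem).comp z₀ (differentiableAt_id.add_const _)).sub_const _)
    |>.congr_of_eventuallyEq hev

theorem injective_extendByTranslation (per : ∀ z : ℂ, R < z.re → h (z + 1) = h z + 1)
    (inj : InjOn h {z | R < z.re}) : Function.Injective (extendByTranslation R h) := by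
  intro z₁ z₂ heq
  obtain ⟨n, hn⟩ := exists_nat_gt (max (R - z₁.re) (R - z₂.re))
  have h₁ : R < z₁.re + n := by linarith [le_max_left (R - z₁.re) (R - z₂.re)]
  have h₂ : R < z₂.re + n := by linarith [le_max_right (R - z₁.re) (R - z₂.re)]
  rw [extendByTranslation_eq per h₁, extendByTranslation_eq per h₂, sub_left_inj] at heq
  exact add_right_cancel (inj (by simpa using h₁) (by simpa using h₂) heq)

theorem exists_eq_add_const_of_lt_re (hol : DifferentiableOn ℂ h {z | R < z.re})
    (inj : InjOn h {z | R < z.re}) (per : ∀ z : ℂ, R < z.re → h (z + 1) = h z + 1) :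
    ∃ c, ∀ z : ℂ, R < z.re → h z = z + c :=
  ⟨extendByTranslation R h 0, fun z hz => by
    rw [← extendByTranslation_of_lt_re per hz]
    exact (differentiable_extendByTranslation per hol).eq_add_const_of_injective_of_map_add_one
      (injective_extendByTranslation per inj) (extendByTranslation_add_one per) z⟩

end HalfPlane

/-- a holomorphic injective map `h` on `𝒫⁺_{R,δ}` satisfying
`h(z+1) = h(z) + 1` (whenever `z` and `z+1` are both in the sector) is a
translation: `h = id + c`. -/
theorem statement15 (R δ : ℝ) (hR : 0 < R) (hδ0 : 0 < δ) (hδ : δ < Real.pi / 2)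
    (h : ℂ → ℂ) (hol : DifferentiableOn ℂ h (Pp R δ))
    (inj : Set.InjOn h (Pp R δ))
    (per : ∀ z ∈ Pp R δ, z + 1 ∈ Pp R δ → h (z + 1) = h z + 1) :
    ∃ c : ℂ, ∀ z ∈ Pp R δ, h z = z + c := by
  have hsub := setOf_lt_re_subset_Pp hR.le hδ0.le
  obtain ⟨c, hc⟩ := exists_eq_add_const_of_lt_re (hol.mono hsub) (inj.mono hsub)
    fun z hz => per z (hsub hz)
      (hsub (by simp only [mem_ofPred_eq, add_re, one_re] at hz ⊢; linarith))
  have hopen := isOpen_Pp hR.le hδ.le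
  have hz₀ : R < ((R + 1 : ℝ) : ℂ).re := by simp
  have hev : h =ᶠ[𝓝 ((R + 1 : ℝ) : ℂ)] fun z => z + c :=
    eventually_of_mem ((isOpen_lt continuous_const continuous_re).mem_nhds hz₀) hc
  exact ⟨c, (hol.analyticOnNhd hopen).eqOn_of_preconnected_of_eventuallyEq
    ((differentiable_id.add_const c).differentiableOn.analyticOnNhd hopen)
    (isPreconnected_Pp hR.le hδ.le) (hsub hz₀) hev⟩
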